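/- Let i, j be integers with 0 < i < j − 1 and let f = Z_i · Z_j. All roots of f are real; let x₃ denote the third smallest element of the multiset of real roots of f (roots counted with multiplicity). Then |f(x)| < 1 for every real x with 0 < x ≤ x₃. -/

import Mathlib

open Polynomial Real

/-- The polynomial sequence `Z`: `Z 0 = 1`, `Z 1 = X - 1`,
`Z n = (X - 2) * Z (n-1) - Z (n-2)` for `n ≥ 2`. -/
noncomputable def Z : ℕ → Polynomial ℝ
  | 0 => 1
  | 1 => X - 1
  | n + 2 => (X - 2) * Z (n + 1) - Z n

/-!
Substituting `x = 4 sin² ψ` turns the recurrence into `cos ψ · Z n x = (-1)ⁿ cos ((2n+1) ψ)`,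
so `Z n` has the `n` distinct real roots `4 sin² ((2k+1) π / (2 (2n+1)))`, `k < n`. The smallest
root of `Z i` and the two smallest roots of `Z j` bound the third root `x₃` of `Z i * Z j`, so every
`0 < x ≤ x₃` is `4 sin² ψ` with `(2i+1) ψ ≤ π/2` or `(2j+1) ψ ≤ 3π/2`. In the first case
`|cos ((2i+1) ψ)| ≤ cos 2ψ < cos² ψ`; in the second both cosines are nonpositive and their product
is at most `cos² ((j-i) ψ) < cos² ψ`. Either way `cos² ψ · |Z i x · Z j x| < cos² ψ`.
-/

namespace Real

theorem cos_mul_cos_le_cos_sq_half_sub (u v : ℝ) : cos u * cos v ≤ cos ((u - v) / 2) ^ 2 := by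
  have hprod : cos u * cos v = (cos (u - v) + cos (u + v)) / 2 := by
    rw [cos_sub, cos_add]; ring
  rw [hprod, cos_sq, show 2 * ((u - v) / 2) = u - v by ring]
  linarith [cos_le_one (u + v)]

theorem abs_cos_mul_lt_cos_sq {a ψ : ℝ} (ha : 2 ≤ a) (hψ : 0 < ψ) (haψ : a * ψ ≤ π / 2) :
    |cos (a * ψ)| < cos ψ ^ 2 := by
  have hπ := pi_pos
  have h2ψ : 2 * ψ ≤ a * ψ := by nlinarith
  have hcos_lt_one : cos ψ < 1 := by
    simpa using cos_lt_cos_of_nonneg_of_le_pi le_rfl (by linarith) hψ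
  have hcos_pos : 0 < cos ψ := cos_pos_of_mem_Ioo ⟨by linarith, by linarith⟩
  calc |cos (a * ψ)| = cos (a * ψ) := abs_of_nonneg (cos_nonneg_of_mem_Icc ⟨by linarith, haψ⟩)
    _ ≤ cos (2 * ψ) := cos_le_cos_of_nonneg_of_le_pi (by linarith) (by linarith) h2ψ
    _ < cos ψ ^ 2 := by rw [cos_two_mul]; nlinarith

theorem abs_cos_mul_mul_cos_mul_lt_cos_sq_of_pi_div_two_le {a b ψ : ℝ} (hψ : 0 < ψ)
    (hab : a + 2 < b) (haψ : π / 2 ≤ a * ψ) (hbψ : b * ψ ≤ 3 * π / 2) :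
    |cos (a * ψ) * cos (b * ψ)| < cos ψ ^ 2 := by
  have hπ := pi_pos
  have hgap : 2 * ψ < (b - a) * ψ := by nlinarith
  have hcos_a : cos (a * ψ) ≤ 0 := cos_nonpos_of_pi_div_two_le_of_le haψ (by nlinarith)
  have hcos_b : cos (b * ψ) ≤ 0 := cos_nonpos_of_pi_div_two_le_of_le (by nlinarith) (by linarith)
  calc |cos (a * ψ) * cos (b * ψ)| = cos (a * ψ) * cos (b * ψ) :=
        abs_of_nonneg (mul_nonneg_of_nonpos_of_nonpos hcos_a hcos_b)
    _ ≤ cos ((b - a) * ψ / 2) ^ 2 := by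
        rw [mul_comm, show (b - a) * ψ / 2 = (b * ψ - a * ψ) / 2 by ring]
        exact cos_mul_cos_le_cos_sq_half_sub _ _
    _ < cos ψ ^ 2 := by
        apply pow_lt_pow_left₀ _ (cos_nonneg_of_mem_Icc ⟨by linarith, by linarith⟩) two_ne_zero
        exact cos_lt_cos_of_nonneg_of_le_pi hψ.le (by linarith) (by linarith)

theorem abs_cos_mul_mul_cos_mul_lt_cos_sq {a b ψ : ℝ} (ha : 2 ≤ a) (hab : a + 2 < b)
    (hψ : 0 < ψ) (h : a * ψ ≤ π / 2 ∨ b * ψ ≤ 3 * π / 2) :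
    |cos (a * ψ) * cos (b * ψ)| < cos ψ ^ 2 := by
  by_cases haψ : a * ψ ≤ π / 2
  · calc |cos (a * ψ) * cos (b * ψ)| ≤ |cos (a * ψ)| := by
          rw [abs_mul]; exact mul_le_of_le_one_right (abs_nonneg _) (abs_cos_le_one _)
      _ < cos ψ ^ 2 := abs_cos_mul_lt_cos_sq ha hψ haψ
  · exact abs_cos_mul_mul_cos_mul_lt_cos_sq_of_pi_div_two_le hψ hab (not_le.1 haψ).le
      (h.resolve_left haψ)

end Real

theorem cos_mul_eval_Z_four_mul_sin_sq (ψ : ℝ) :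
    ∀ n : ℕ, cos ψ * (Z n).eval (4 * sin ψ ^ 2) = (-1) ^ n * cos ((2 * n + 1) * ψ)
  | 0 => by simp [Z]
  | 1 => by
    simp only [Z, eval_sub, eval_X, eval_one]
    rw [show (2 * ((1 : ℕ) : ℝ) + 1) * ψ = 3 * ψ by norm_num, cos_three_mul]
    linear_combination 4 * cos ψ * sin_sq_add_cos_sq ψ
  | n + 2 => by
    have h₁ := cos_mul_eval_Z_four_mul_sin_sq ψ (n + 1)
    have h₀ := cos_mul_eval_Z_four_mul_sin_sq ψ n
    set θ := (2 * (n : ℝ) + 3) * ψ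
    have hθ₁ : (2 * ((n + 1 : ℕ) : ℝ) + 1) * ψ = θ := by push_cast; ring
    have hθ₀ : (2 * (n : ℝ) + 1) * ψ = θ - 2 * ψ := by ring
    have hθ₂ : (2 * ((n + 2 : ℕ) : ℝ) + 1) * ψ = θ + 2 * ψ := by push_cast; ring
    rw [hθ₁] at h₁
    rw [hθ₀, cos_sub] at h₀
    rw [hθ₂, cos_add]
    simp only [Z, eval_sub, eval_mul, eval_X, eval_ofNat]
    have hsin : 4 * sin ψ ^ 2 - 2 = -2 * cos (2 * ψ) := by
      rw [cos_two_mul]; linear_combination 4 * sin_sq_add_cos_sq ψ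
    rw [hsin]
    linear_combination (-2 * cos (2 * ψ)) * h₁ - h₀

theorem Z_monic_and_natDegree : ∀ n : ℕ, (Z n).Monic ∧ (Z n).natDegree = n
  | 0 => ⟨monic_one, natDegree_one⟩
  | 1 => by simpa [Z] using And.intro (monic_X_sub_C (1 : ℝ)) (natDegree_X_sub_C (1 : ℝ))
  | n + 2 => by
    obtain ⟨hm₁, hd₁⟩ := Z_monic_and_natDegree (n + 1)
    obtain ⟨-, hd₀⟩ := Z_monic_and_natDegree n
    have hmX : ((X : ℝ[X]) - 2).Monic := by rw [← map_ofNat C 2]; exact monic_X_sub_C 2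
    have hd : ((X - 2) * Z (n + 1)).natDegree = n + 2 := by
      rw [hmX.natDegree_mul hm₁, hd₁, ← map_ofNat C 2, natDegree_X_sub_C, add_comm]
    have hlt : (Z n).natDegree < ((X - 2) * Z (n + 1)).natDegree := by omega
    exact ⟨(hmX.mul hm₁).sub_of_left (degree_lt_degree hlt),
      by rw [Z, natDegree_sub_eq_left_of_natDegree_lt hlt, hd]⟩

noncomputable def zAngle (n k : ℕ) : ℝ := (2 * k + 1) * π / (2 * (2 * n + 1))

noncomputable def zRoot (n k : ℕ) : ℝ := 4 * sin (zAngle n k) ^ 2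

theorem zAngle_pos (n k : ℕ) : 0 < zAngle n k := by
  unfold zAngle; positivity

theorem mul_zAngle (n k : ℕ) : (2 * n + 1) * zAngle n k = (2 * k + 1) * π / 2 := by
  unfold zAngle; field_simp

theorem mul_le_of_le_zAngle {n k : ℕ} {ψ : ℝ} (h : ψ ≤ zAngle n k) :
    (2 * n + 1) * ψ ≤ (2 * k + 1) * π / 2 :=
  (mul_le_mul_of_nonneg_left h (by positivity)).trans_eq (mul_zAngle n k)

theorem zAngle_lt_pi_div_two {n k : ℕ} (hk : k < n) : zAngle n k < π / 2 := by
  have hk' : (2 * k + 1 : ℝ) < 2 * n + 1 := by norm_cast; omega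
  have h := mul_zAngle n k
  nlinarith [pi_pos, zAngle_pos n k]

theorem zAngle_strictMono (n : ℕ) : StrictMono (zAngle n) := by
  intro k l hkl
  unfold zAngle
  gcongr

theorem strictMonoOn_four_mul_sin_sq :
    StrictMonoOn (fun θ => 4 * sin θ ^ 2) (Set.Icc 0 (π / 2)) := by
  intro x hx y hy hxy
  have hsin := strictMonoOn_sin ⟨by linarith [pi_pos, hx.1], hx.2⟩
    ⟨by linarith [pi_pos, hy.1], hy.2⟩ hxy
  have hsin₀ : 0 ≤ sin x := sin_nonneg_of_nonneg_of_le_pi hx.1 (by linarith [pi_pos, hx.2])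
  dsimp only
  nlinarith

theorem zRoot_strictMonoOn (n : ℕ) : StrictMonoOn (zRoot n) (Set.Iio n) := fun k hk l hl hkl =>
  strictMonoOn_four_mul_sin_sq ⟨(zAngle_pos n k).le, (zAngle_lt_pi_div_two hk).le⟩
    ⟨(zAngle_pos n l).le, (zAngle_lt_pi_div_two hl).le⟩ (zAngle_strictMono n hkl)

theorem eval_zRoot {n k : ℕ} (hk : k < n) : (Z n).eval (zRoot n k) = 0 := by
  have h := cos_mul_eval_Z_four_mul_sin_sq (zAngle n k) n
  have hcos : cos ((2 * k + 1) * π / 2) = 0 := cos_eq_zero_iff.2 ⟨k, by push_cast; ring⟩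
  rw [mul_zAngle, hcos, mul_zero] at h
  exact (mul_eq_zero.1 h).resolve_left
    (cos_pos_of_mem_Ioo ⟨by linarith [pi_pos, zAngle_pos n k], zAngle_lt_pi_div_two hk⟩).ne'

theorem roots_Z (n : ℕ) : (Z n).roots = (Multiset.range n).map (zRoot n) := by
  obtain ⟨hm, hd⟩ := Z_monic_and_natDegree n
  symm
  apply Multiset.eq_of_le_of_card_le
  · rw [Multiset.le_iff_subset ((Multiset.nodup_range n).map_on fun k hk l hl =>
      (zRoot_strictMonoOn n).injOn (Multiset.mem_range.1 hk) (Multiset.mem_range.1 hl))]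
    intro r hr
    obtain ⟨k, hk, rfl⟩ := Multiset.mem_map.1 hr
    exact (mem_roots hm.ne_zero).2 (eval_zRoot (Multiset.mem_range.1 hk))
  · simpa [hd] using card_roots' (Z n)

theorem Polynomial.im_eq_zero_of_aeval_eq_zero {p : ℝ[X]} (hp : p ≠ 0)
    (hroots : p.roots.card = p.natDegree) {z : ℂ} (hz : aeval z p = 0) : z.im = 0 := by
  have hmap : p.map (algebraMap ℝ ℂ) ≠ 0 := Polynomial.map_ne_zero hp
  have hz' : z ∈ p.roots.map (algebraMap ℝ ℂ) := by
    rw [roots_map_of_map_ne_zero_of_card_eq_natDegree _ hmap hroots, mem_roots hmap, IsRoot,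
      eval_map_algebraMap]
    exact hz
  obtain ⟨t, -, rfl⟩ := Multiset.mem_map.1 hz'
  exact Complex.ofReal_im t

theorem List.Pairwise.getD_le_of_lt_countP {α : Type*} [LinearOrder α] {l : List α}
    (hl : l.Pairwise (· ≤ ·)) {u : α} {n : ℕ} (d : α) (hn : n < l.countP (· ≤ u)) :
    l.getD n d ≤ u := by
  induction l generalizing n with
  | nil => simp at hn
  | cons a l ih =>
    cases n with
    | zero =>
      by_contra hau
      have hall : (a :: l).countP (· ≤ u) = 0 := by
        rw [List.countP_eq_zero]
        intro y hy
        rcases List.mem_cons.1 hy with rfl | hy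
        · simpa using hau
        · simpa using lt_of_lt_of_le (not_le.1 hau) (List.rel_of_pairwise_cons hl hy)
      omega
    | succ m =>
      rw [List.countP_cons] at hn
      exact ih hl.of_cons (by split_ifs at hn <;> omega)

theorem getD_sort_roots_Z_mul_Z_le {i j : ℕ} (hi : 0 < i) (hij : i + 1 < j) :
    ((Z i * Z j).roots.sort (· ≤ ·)).getD 2 0 ≤ max (zRoot i 0) (zRoot j 1) := by
  set m := max (zRoot i 0) (zRoot j 1)
  set s := (Multiset.range 1).map (zRoot i) + (Multiset.range 2).map (zRoot j)
  have hsub : s ≤ (Z i * Z j).roots := by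
    rw [roots_mul ((Z_monic_and_natDegree i).1.mul (Z_monic_and_natDegree j).1).ne_zero, roots_Z,
      roots_Z]
    exact add_le_add (Multiset.map_le_map (Multiset.range_le.2 hi))
      (Multiset.map_le_map (Multiset.range_le.2 (by omega)))
  have hj₀ : zRoot j 0 ≤ zRoot j 1 :=
    (zRoot_strictMonoOn j (by simp; omega) (by simp; omega) zero_lt_one).le
  have hs : ∀ r ∈ s, r ≤ m := by
    simp [s, m, Multiset.range_succ, hj₀]
  apply (Multiset.pairwise_sort _ _).getD_le_of_lt_countP
  rw [← Multiset.coe_countP, Multiset.sort_eq]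
  calc 2 < Multiset.card s := by simp [s]
    _ = Multiset.countP (· ≤ m) s := (Multiset.countP_eq_card.2 hs).symm
    _ ≤ _ := Multiset.countP_le_of_le _ hsub

theorem exists_mem_Ioc_four_mul_sin_sq_eq {x θ : ℝ} (hx : 0 < x) (hθ : 0 ≤ θ)
    (hxθ : x ≤ 4 * sin θ ^ 2) : ∃ ψ ∈ Set.Ioc 0 θ, 4 * sin ψ ^ 2 = x := by
  obtain ⟨ψ, ⟨hψ₀, hψθ⟩, hψ⟩ := intermediate_value_Icc hθ
    (by fun_prop : Continuous fun ψ => 4 * sin ψ ^ 2).continuousOn ⟨by simpa using hx.le, hxθ⟩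
  refine ⟨ψ, ⟨hψ₀.lt_of_ne ?_, hψθ⟩, hψ⟩
  rintro rfl
  simp only [sin_zero] at hψ
  linarith

theorem abs_eval_Z_mul_Z_four_mul_sin_sq_lt_one {i j : ℕ} (hi : 0 < i) (hij : i + 1 < j) {ψ : ℝ}
    (hψ : 0 < ψ) (h : ψ ≤ zAngle i 0 ∨ ψ ≤ zAngle j 1) :
    |(Z i * Z j).eval (4 * sin ψ ^ 2)| < 1 := by
  have hi' : (1 : ℝ) ≤ i := by exact_mod_cast hi
  have hij' : (i : ℝ) + 1 < j := by exact_mod_cast hij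
  have hkey := abs_cos_mul_mul_cos_mul_lt_cos_sq (a := 2 * i + 1) (b := 2 * j + 1)
    (by linarith) (by linarith) hψ <| h.imp
      (fun h => (mul_le_of_le_zAngle h).trans_eq (by norm_num))
      (fun h => (mul_le_of_le_zAngle h).trans_eq (by norm_num))
  have hprod : cos ψ ^ 2 * |(Z i * Z j).eval (4 * sin ψ ^ 2)|
      = |cos ((2 * i + 1) * ψ) * cos ((2 * j + 1) * ψ)| := by
    rw [← abs_of_nonneg (sq_nonneg (cos ψ)), ← abs_mul, eval_mul,
      show cos ψ ^ 2 * ((Z i).eval _ * (Z j).eval _)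
        = (cos ψ * (Z i).eval _) * (cos ψ * (Z j).eval _) by ring,
      cos_mul_eval_Z_four_mul_sin_sq, cos_mul_eval_Z_four_mul_sin_sq]
    simp [abs_mul]
  rw [← hprod] at hkey
  exact lt_of_mul_lt_mul_left (hkey.trans_eq (mul_one _).symm) (sq_nonneg _)

theorem abs_ZZ_lt_one_up_to_third_root (i j : ℕ) (hi : 0 < i) (hij : i + 1 < j) :
    -- all complex roots of `Z i * Z j` are real
    (∀ z : ℂ, (Polynomial.aeval z) (Z i * Z j) = 0 → z.im = 0) ∧
    -- `|f x| < 1` for `0 < x ≤ x₃`, where `x₃` is the third smallest real root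
    -- (roots counted with multiplicity, sorted in nondecreasing order)
    ∀ x : ℝ, 0 < x →
      x ≤ (((Z i * Z j).roots.sort (· ≤ ·)).getD 2 0) →
      |(Z i * Z j).eval x| < 1 := by
  have hroots (n : ℕ) : (Z n).roots.card = (Z n).natDegree := by
    simp [roots_Z, (Z_monic_and_natDegree n).2]
  refine ⟨fun z hz => ?_, fun x hx hx₃ => ?_⟩
  · rw [map_mul, mul_eq_zero] at hz
    rcases hz with hz | hz
    · exact im_eq_zero_of_aeval_eq_zero (Z_monic_and_natDegree i).1.ne_zero (hroots i) hz
    · exact im_eq_zero_of_aeval_eq_zero (Z_monic_and_natDegree j).1.ne_zero (hroots j) hz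
  · rcases le_max_iff.1 (hx₃.trans (getD_sort_roots_Z_mul_Z_le hi hij)) with hxr | hxr
    · obtain ⟨ψ, ⟨hψ₀, hψ⟩, rfl⟩ := exists_mem_Ioc_four_mul_sin_sq_eq hx (zAngle_pos i 0).le hxr
      exact abs_eval_Z_mul_Z_four_mul_sin_sq_lt_one hi hij hψ₀ (Or.inl hψ)
    · obtain ⟨ψ, ⟨hψ₀, hψ⟩, rfl⟩ := exists_mem_Ioc_four_mul_sin_sq_eq hx (zAngle_pos j 1).le hxr
      exact abs_eval_Z_mul_Z_four_mul_sin_sq_lt_one hi hij hψ₀ (Or.inr hψ)
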